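/- Let n ≥ 3, (T, Σ, ⟠) an n-angulated category, A a full subcategory closed under extensions, and let F ⊆ E be almost n-exact structures for A. (1) Let A₁ → ⋯ → Aₙ₋₂ → P →p A →ψ ΣA₁ be an n-angle in E such that p is E-projective. Then a morphism φ: X → A belongs to Φ_E(F) if and only if ψφ belongs to Φ(F). (2) Let A →e E' → A₃ → ⋯ → Aₙ →ψ ΣA be an n-angle in E such that e is E-injective. Then a morphism φ: A → Y belongs to Φ^E(F) if and only if (Σφ)ψ belongs to Φ(F). -/

import Mathlib

/-!
Common framework: `n`-angulated categories (Geiss–Keller–Oppermann), almost `n`-exact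
structures on an extension closed subcategory, ideals, phantom ideals, (special)
precovers/preenvelopes, relative phantoms, pullback/pushout almost `n`-exact structures.
-/

open CategoryTheory CategoryTheory.Limits ZeroObject

universe v u

namespace IdealApprox

/-- An `n`-`Σ`-sequence `A₁ → A₂ → ⋯ → Aₙ → ΣA₁` in `T`.  The objects are
`obj 0, …, obj (n-1)`; `mor i : obj i ⟶ obj (i+1)` for `i ≤ n - 2` are the structure
morphisms (indices `≥ n - 1` are junk), and `phantom : obj (n-1) ⟶ S.obj (obj 0)`
is the last morphism `αₙ`. -/
structure NSeq (n : ℕ) (T : Type u) [Category.{v} T] (S : T ⥤ T) where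
  obj : ℕ → T
  mor : ∀ i : ℕ, obj i ⟶ obj (i + 1)
  phantom : obj (n - 1) ⟶ S.obj (obj 0)

/-- A morphism of `n`-`Σ`-sequences. -/
structure NSeqHom {n : ℕ} {T : Type u} [Category.{v} T] {S : T ⥤ T}
    (d e : NSeq n T S) where
  app : ∀ i : ℕ, d.obj i ⟶ e.obj i
  comm : ∀ i : ℕ, i + 2 ≤ n → app i ≫ e.mor i = d.mor i ≫ app (i + 1)
  comm_phantom : app (n - 1) ≫ e.phantom = d.phantom ≫ S.map (app 0)

section Defs

variable {n : ℕ} {T : Type u} [Category.{v} T] [Preadditive T] [HasZeroObject T]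
  [HasBinaryBiproducts T] {S : T ⥤ T}

/-- The componentwise direct sum of two `n`-`Σ`-sequences. -/
noncomputable def biprodSeq (d e : NSeq n T S) : NSeq n T S where
  obj i := d.obj i ⊞ e.obj i
  mor i := biprod.map (d.mor i) (e.mor i)
  phantom := biprod.desc (d.phantom ≫ S.map biprod.inl) (e.phantom ≫ S.map biprod.inr)

/-- The trivial `n`-`Σ`-sequence `A = A → 0 → ⋯ → 0 → ΣA`. -/
noncomputable def trivialNSeq (A : T) : NSeq n T S where
  obj i := match i with
    | 0 => A
    | 1 => A
    | _ + 2 => 0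
  mor i := match i with
    | 0 => 𝟙 A
    | _ + 1 => 0
  phantom := 0

/-- `e` is the left rotation `A₂ → A₃ → ⋯ → Aₙ → ΣA₁ → ΣA₂` (with last morphism
`(-1)ⁿ Σα₁`) of `d`. -/
structure IsLeftRotation (d e : NSeq n T S) : Prop where
  hn : 3 ≤ n
  obj_eq : ∀ i : ℕ, i + 2 ≤ n → e.obj i = d.obj (i + 1)
  obj_last : e.obj (n - 1) = S.obj (d.obj 0)
  mor_eq : ∀ (i : ℕ) (h3 : i + 3 ≤ n),
    e.mor i = eqToHom (obj_eq i (by omega)) ≫ d.mor (i + 1) ≫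
      eqToHom (obj_eq (i + 1) (by omega)).symm
  mor_last : e.mor (n - 2) =
    eqToHom ((obj_eq (n - 2) (by omega)).trans
        (congrArg d.obj (by omega : n - 2 + 1 = n - 1))) ≫
      d.phantom ≫
      eqToHom (obj_last.symm.trans (congrArg e.obj (by omega : n - 1 = n - 2 + 1)))
  phantom_eq : e.phantom =
    eqToHom obj_last ≫ ((-1 : ℤ) ^ n • S.map (d.mor 0)) ≫
      eqToHom (congrArg S.obj (obj_eq 0 (by omega)).symm)

/-- `c` is the mapping cone of the morphism `φ : d ⟶ e` of `n`-`Σ`-sequences, i.e.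
`c` has objects `A_{i+1} ⊞ B_i` and the matrix morphisms `[(-α, 0), (φ, β)]`. -/
structure IsCone {d e : NSeq n T S} (φ : NSeqHom d e) (c : NSeq n T S) : Prop where
  hn : 3 ≤ n
  obj_eq : ∀ i : ℕ, i + 2 ≤ n → c.obj i = (d.obj (i + 1) ⊞ e.obj i)
  obj_last : c.obj (n - 1) = (S.obj (d.obj 0) ⊞ e.obj (n - 1))
  mor_eq : ∀ (i : ℕ) (h3 : i + 3 ≤ n),
    c.mor i = eqToHom (obj_eq i (by omega)) ≫
      (biprod.map (-(d.mor (i + 1))) (e.mor i) +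
        biprod.fst ≫ φ.app (i + 1) ≫ biprod.inr) ≫
      eqToHom (obj_eq (i + 1) (by omega)).symm
  mor_last : c.mor (n - 2) =
    eqToHom (obj_eq (n - 2) (by omega)) ≫
      (biprod.map (eqToHom (congrArg d.obj (by omega : n - 2 + 1 = n - 1)) ≫
          (-(d.phantom))) (e.mor (n - 2)) +
        biprod.fst ≫ eqToHom (congrArg d.obj (by omega : n - 2 + 1 = n - 1)) ≫
          φ.app (n - 1) ≫ eqToHom (congrArg e.obj (by omega : n - 1 = n - 2 + 1)) ≫
          biprod.inr) ≫
      eqToHom (show (S.obj (d.obj 0) ⊞ e.obj (n - 2 + 1)) = c.obj (n - 2 + 1) by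
        rw [show n - 2 + 1 = n - 1 from by omega]; exact obj_last.symm)
  phantom_eq : c.phantom =
    eqToHom obj_last ≫
      biprod.desc ((-(S.map (d.mor 0))) ≫ S.map biprod.inl +
          S.map (φ.app 0) ≫ S.map biprod.inr)
        (e.phantom ≫ S.map biprod.inr) ≫
      eqToHom (congrArg S.obj (obj_eq 0 (by omega)).symm)

/-- The axioms (F1)–(F4) for a class `Ang` of `n`-`Σ`-sequences to be an
`n`-angulation of `(T, S)`; the members of `Ang` are the `n`-angles. -/
structure IsNAngulated (Ang : Set (NSeq n T S)) : Prop where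
  /-- (F1)(a): closed under direct sums. -/
  biprod_mem : ∀ d e : NSeq n T S, d ∈ Ang → e ∈ Ang → biprodSeq d e ∈ Ang
  /-- (F1)(a): closed under direct summands. -/
  summand_mem : ∀ d e : NSeq n T S, e ∈ Ang →
    (∃ (f : NSeqHom d e) (g : NSeqHom e d), ∀ i, f.app i ≫ g.app i = 𝟙 (d.obj i)) →
    d ∈ Ang
  /-- (F1)(b): contains the trivial sequences. -/
  trivial_mem : ∀ A : T, (trivialNSeq A : NSeq n T S) ∈ Ang
  /-- (F1)(c): every morphism is the first morphism of some `n`-angle. -/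
  complete : ∀ {X Y : T} (f : X ⟶ Y), ∃ d ∈ Ang, ∃ (h0 : d.obj 0 = X) (h1 : d.obj 1 = Y),
    d.mor 0 = eqToHom h0 ≫ f ≫ eqToHom h1.symm
  /-- (F2): closed under rotation, in both directions. -/
  rotate : ∀ d e : NSeq n T S, IsLeftRotation d e → (d ∈ Ang ↔ e ∈ Ang)
  /-- (F3)+(F4): any commutative square on the first morphisms of two `n`-angles
  extends to a morphism of `n`-angles whose mapping cone is again an `n`-angle. -/
  fill : ∀ d e : NSeq n T S, d ∈ Ang → e ∈ Ang →
    ∀ (f0 : d.obj 0 ⟶ e.obj 0) (f1 : d.obj 1 ⟶ e.obj 1),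
      f0 ≫ e.mor 0 = d.mor 0 ≫ f1 →
      ∃ φ : NSeqHom d e, φ.app 0 = f0 ∧ φ.app 1 = f1 ∧ ∃ c ∈ Ang, IsCone φ c

/-- All (meaningful) objects of the sequence `d` belong to the subcategory `A`. -/
def objsIn (A : Set T) (d : NSeq n T S) : Prop := ∀ i : ℕ, i < n → d.obj i ∈ A

/-- The class `D_A` of `n`-angles all of whose objects lie in `A`. -/
def DA (Ang : Set (NSeq n T S)) (A : Set T) : Set (NSeq n T S) :=
  {d | d ∈ Ang ∧ objsIn A d}

/-- The full subcategory `A` is closed under extensions in `(T, S, Ang)`. -/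
def ClosedUnderExtensions (Ang : Set (NSeq n T S)) (A : Set T) : Prop :=
  ∀ d ∈ Ang, d.obj 0 ∈ A → d.obj (n - 1) ∈ A → objsIn A d

/-- An almost `n`-exact structure `E ⊆ D_A` for `A`: (N1) closed under direct sums and
containing all split `n`-angles, (N2) closed under base change, (N3) closed under
cobase change. -/
structure IsAlmostNExact (Ang : Set (NSeq n T S)) (A : Set T)
    (E : Set (NSeq n T S)) : Prop where
  subset_DA : E ⊆ DA Ang A
  sum_mem : ∀ d e : NSeq n T S, d ∈ E → e ∈ E → biprodSeq d e ∈ E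
  split_mem : ∀ d ∈ DA Ang A, d.phantom = 0 → d ∈ E
  base_change : ∀ d ∈ E, ∀ e ∈ DA Ang A, ∀ (φ : NSeqHom e d) (h : e.obj 0 = d.obj 0),
    φ.app 0 = eqToHom h → e ∈ E
  cobase_change : ∀ d ∈ E, ∀ e ∈ DA Ang A,
    ∀ (φ : NSeqHom d e) (h : d.obj (n - 1) = e.obj (n - 1)),
      φ.app (n - 1) = eqToHom h → e ∈ E

/-- The class `Φ(E)` of `E`-phantoms, i.e. last morphisms of `n`-angles in `E`. -/
def phant (E : Set (NSeq n T S)) : MorphismProperty T := fun X Y f =>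
  ∃ d ∈ E, ∃ (hX : d.obj (n - 1) = X) (hY : S.obj (d.obj 0) = Y),
    f = eqToHom hX.symm ≫ d.phantom ≫ eqToHom hY

/-- `f` is an `E`-inflation, i.e. the first morphism of some `n`-angle in `E`. -/
def IsInfl (E : Set (NSeq n T S)) {X Y : T} (f : X ⟶ Y) : Prop :=
  ∃ d ∈ E, ∃ (h0 : d.obj 0 = X) (h1 : d.obj 1 = Y),
    f = eqToHom h0.symm ≫ d.mor 0 ≫ eqToHom h1

/-- `f` is an `E`-deflation, i.e. the `(n-1)`-st morphism of some `n`-angle in `E`. -/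
def IsDefl (E : Set (NSeq n T S)) {X Y : T} (f : X ⟶ Y) : Prop :=
  ∃ d ∈ E, ∃ (h0 : d.obj (n - 2) = X) (h1 : d.obj (n - 2 + 1) = Y),
    f = eqToHom h0.symm ≫ d.mor (n - 2) ≫ eqToHom h1

/-- The ideal `E-proj` of `E`-projective morphisms of `A`: morphisms factoring
through every `E`-deflation with the appropriate target. -/
def EProj (A : Set T) (E : Set (NSeq n T S)) : MorphismProperty T := fun X Z f =>
  X ∈ A ∧ Z ∈ A ∧ ∀ ⦃P : T⦄ (p : P ⟶ Z), IsDefl E p → ∃ g : X ⟶ P, g ≫ p = f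

/-- The ideal `E-inj` of `E`-injective morphisms of `A`: morphisms factoring
through every `E`-inflation with the appropriate source. -/
def EInj (A : Set T) (E : Set (NSeq n T S)) : MorphismProperty T := fun Z Y f =>
  Z ∈ A ∧ Y ∈ A ∧ ∀ ⦃Q : T⦄ (m : Z ⟶ Q), IsInfl E m → ∃ g : Q ⟶ Y, m ≫ g = f

/-- An ideal in the full subcategory `A`: a class of morphisms of `A` closed under
sums of parallel morphisms and under composition with arbitrary morphisms of `A`. -/
structure IsIdeal (A : Set T) (I : MorphismProperty T) : Prop where
  src_mem : ∀ ⦃X Y : T⦄ (f : X ⟶ Y), I f → X ∈ A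
  tgt_mem : ∀ ⦃X Y : T⦄ (f : X ⟶ Y), I f → Y ∈ A
  add_mem : ∀ ⦃X Y : T⦄ (f g : X ⟶ Y), I f → I g → I (f + g)
  comp_mem : ∀ ⦃W X Y Z : T⦄ (f : W ⟶ X) (i : X ⟶ Y) (g : Y ⟶ Z),
    W ∈ A → Z ∈ A → I i → I (f ≫ i ≫ g)

/-- A phantom `A`-ideal: a class of morphisms `X → ΣB` with `X, B ∈ A`, closed under
sums and under `(Σg) ∘ φ ∘ f` for morphisms `f, g` of `A`. -/
structure IsPhantomIdeal (S : T ⥤ T) (A : Set T) (P : MorphismProperty T) : Prop where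
  mem : ∀ ⦃X Y : T⦄ (φ : X ⟶ Y), P φ → X ∈ A ∧ ∃ B ∈ A, Y = S.obj B
  add_mem : ∀ ⦃X Y : T⦄ (φ ψ : X ⟶ Y), P φ → P ψ → P (φ + ψ)
  comp_mem : ∀ ⦃X' X B B' : T⦄ (f : X' ⟶ X) (φ : X ⟶ S.obj B) (g : B ⟶ B'),
    X' ∈ A → X ∈ A → B ∈ A → B' ∈ A → P φ → P (f ≫ φ ≫ S.map g)

/-- `i` is an `I`-precover (of its target). -/
def IsPrecover (I : MorphismProperty T) {X A₀ : T} (i : X ⟶ A₀) : Prop :=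
  I i ∧ ∀ ⦃X' : T⦄ (i' : X' ⟶ A₀), I i' → ∃ g : X' ⟶ X, g ≫ i = i'

/-- `j` is an `I`-preenvelope (of its source). -/
def IsPreenvelope (I : MorphismProperty T) {B Y : T} (j : B ⟶ Y) : Prop :=
  I j ∧ ∀ ⦃Y' : T⦄ (j' : B ⟶ Y'), I j' → ∃ g : Y ⟶ Y', j ≫ g = j'

/-- The ideal `I` is precovering: every object of `A` has an `I`-precover. -/
def Precovering (A : Set T) (I : MorphismProperty T) : Prop :=
  ∀ A₀ ∈ A, ∃ (X : T) (i : X ⟶ A₀), IsPrecover I i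

/-- The ideal `I` is preenveloping: every object of `A` has an `I`-preenvelope. -/
def Preenveloping (A : Set T) (I : MorphismProperty T) : Prop :=
  ∀ B ∈ A, ∃ (Y : T) (j : B ⟶ Y), IsPreenvelope I j

/-- A phantom `A`-ideal `P` is precovering: every `ΣA₀` (`A₀ ∈ A`) has a `P`-precover. -/
def PhantPrecovering (S : T ⥤ T) (A : Set T) (P : MorphismProperty T) : Prop :=
  ∀ A₀ ∈ A, ∃ (X : T) (φ : X ⟶ S.obj A₀), IsPrecover P φ

/-- A phantom `A`-ideal `P` is preenveloping: every `B ∈ A` has a `P`-preenvelope. -/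
def PhantPreenveloping (S : T ⥤ T) (A : Set T) (P : MorphismProperty T) : Prop :=
  ∀ B ∈ A, ∃ (Y : T) (φ : B ⟶ S.obj Y), IsPreenvelope P φ

/-- There are enough `E`-injective morphisms: every object of `A` admits an
`E`-injective `E`-inflation out of it. -/
def EnoughInjectives (A : Set T) (E : Set (NSeq n T S)) : Prop :=
  ∀ A₀ ∈ A, ∃ (E₀ : T) (e : A₀ ⟶ E₀), IsInfl E e ∧ EInj A E e

/-- There are enough `E`-projective morphisms: every object of `A` admits an
`E`-projective `E`-deflation onto it. -/
def EnoughProjectives (A : Set T) (E : Set (NSeq n T S)) : Prop :=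
  ∀ C ∈ A, ∃ (P : T) (p : P ⟶ C), IsDefl E p ∧ EProj A E p

/-- `f ⊥ g` with respect to `E`: `(Σg) φ f = 0` for all `E`-phantoms `φ`. -/
def OrthRel (E : Set (NSeq n T S)) {X Z B Y : T} (f : X ⟶ Z) (g : B ⟶ Y) : Prop :=
  ∀ φ : Z ⟶ S.obj B, phant E φ → f ≫ φ ≫ S.map g = 0

/-- The right orthogonal ideal `M^⊥` (with respect to `E`) of a class of morphisms. -/
def perpRight (A : Set T) (E : Set (NSeq n T S)) (M : MorphismProperty T) :
    MorphismProperty T := fun B Y g =>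
  B ∈ A ∧ Y ∈ A ∧ ∀ ⦃X Z : T⦄ (m : X ⟶ Z), M m → OrthRel E m g

/-- The left orthogonal ideal `⊥M` (with respect to `E`) of a class of morphisms. -/
def perpLeft (A : Set T) (E : Set (NSeq n T S)) (M : MorphismProperty T) :
    MorphismProperty T := fun X Z f =>
  X ∈ A ∧ Z ∈ A ∧ ∀ ⦃B Y : T⦄ (m : B ⟶ Y), M m → OrthRel E f m

/-- `i : X ⟶ A₀` is a special `I`-precover with respect to `E`. -/
def IsSpecialPrecover (A : Set T) (E : Set (NSeq n T S)) (I : MorphismProperty T)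
    {X A₀ : T} (i : X ⟶ A₀) : Prop :=
  I i ∧ ∃ d ∈ E, ∃ (hX : d.obj (n - 2) = X) (hA : d.obj (n - 2 + 1) = A₀),
    i = eqToHom hX.symm ≫ d.mor (n - 2) ≫ eqToHom hA ∧
    ∃ (B : T) (φ : d.obj (n - 1) ⟶ S.obj B) (j : B ⟶ d.obj 0),
      phant E φ ∧ perpRight A E I j ∧ d.phantom = φ ≫ S.map j

/-- `j : B₀ ⟶ Y` is a special `J`-preenvelope with respect to `E`. -/
def IsSpecialPreenvelope (A : Set T) (E : Set (NSeq n T S)) (J : MorphismProperty T)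
    {B₀ Y : T} (j : B₀ ⟶ Y) : Prop :=
  J j ∧ ∃ d ∈ E, ∃ (hB : d.obj 0 = B₀) (hY : d.obj 1 = Y),
    j = eqToHom hB.symm ≫ d.mor 0 ≫ eqToHom hY ∧
    ∃ (C : T) (i : d.obj (n - 1) ⟶ C) (φ : C ⟶ S.obj (d.obj 0)),
      perpLeft A E J i ∧ phant E φ ∧ d.phantom = i ≫ φ

/-- The ideal `I` is special precovering with respect to `E`. -/
def SpecialPrecovering (A : Set T) (E : Set (NSeq n T S))
    (I : MorphismProperty T) : Prop :=
  ∀ A₀ ∈ A, ∃ (X : T) (i : X ⟶ A₀), IsSpecialPrecover A E I i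

/-- The ideal `J` is special preenveloping with respect to `E`. -/
def SpecialPreenveloping (A : Set T) (E : Set (NSeq n T S))
    (J : MorphismProperty T) : Prop :=
  ∀ B ∈ A, ∃ (Y : T) (j : B ⟶ Y), IsSpecialPreenvelope A E J j

/-- `(I, J)` is an ideal cotorsion pair with respect to `E`: `J = I^⊥` and `I = ⊥J`. -/
def IsIdealCotorsionPair (A : Set T) (E : Set (NSeq n T S))
    (I J : MorphismProperty T) : Prop :=
  J = perpRight A E I ∧ I = perpLeft A E J

/-- The ideal `Φ_E(F)` of `F`-phantoms relative to `E`. -/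
def relPhant (A : Set T) (E F : Set (NSeq n T S)) : MorphismProperty T := fun X Z f =>
  X ∈ A ∧ Z ∈ A ∧ ∀ ⦃B : T⦄ (h : Z ⟶ S.obj B), phant E h → phant F (f ≫ h)

/-- The ideal `Φ^E(F)` of `F`-cophantoms relative to `E`. -/
def relCophant (A : Set T) (E F : Set (NSeq n T S)) : MorphismProperty T := fun Z Y f =>
  Z ∈ A ∧ Y ∈ A ∧ ∀ ⦃W : T⦄ (h : W ⟶ Z), phant E (S.map h) → phant F (S.map (h ≫ f))

/-- The pullback almost `n`-exact structure `PB_E(I)` associated to an ideal `I`: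
`n`-angles in `E` whose phantom factors as `ψ ∘ i` with `i ∈ I`, `ψ ∈ Φ(E)`. -/
def PB (E : Set (NSeq n T S)) (I : MorphismProperty T) : Set (NSeq n T S) :=
  {d | d ∈ E ∧ ∃ (C : T) (i : d.obj (n - 1) ⟶ C) (ψ : C ⟶ S.obj (d.obj 0)),
    I i ∧ phant E ψ ∧ d.phantom = i ≫ ψ}

/-- The pushout almost `n`-exact structure `PO_E(J)` associated to an ideal `J`:
`n`-angles in `E` whose phantom factors as `(Σj) ∘ ψ` with `j ∈ J`, `ψ ∈ Φ(E)`. -/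
def PO (E : Set (NSeq n T S)) (J : MorphismProperty T) : Set (NSeq n T S) :=
  {d | d ∈ E ∧ ∃ (B : T) (ψ : d.obj (n - 1) ⟶ S.obj B) (j : B ⟶ d.obj 0),
    phant E ψ ∧ J j ∧ d.phantom = ψ ≫ S.map j}

/-- `E^I`: the `n`-angles from `A` whose phantom `φ` satisfies `(Σi) φ = 0` for
all `i ∈ I`. -/
def EUp (Ang : Set (NSeq n T S)) (A : Set T) (I : MorphismProperty T) :
    Set (NSeq n T S) :=
  {d | d ∈ DA Ang A ∧ ∀ ⦃Y : T⦄ (i : d.obj 0 ⟶ Y), I i → d.phantom ≫ S.map i = 0}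

/-- `E_I`: the `n`-angles from `A` whose phantom `φ` satisfies `φ i = 0` for
all `i ∈ I`. -/
def EDown (Ang : Set (NSeq n T S)) (A : Set T) (I : MorphismProperty T) :
    Set (NSeq n T S) :=
  {d | d ∈ DA Ang A ∧ ∀ ⦃X : T⦄ (i : X ⟶ d.obj (n - 1)), I i → i ≫ d.phantom = 0}

/-- `D_A(P)`: the `n`-angles from `A` whose phantom lies in `P`. -/
def DAI (Ang : Set (NSeq n T S)) (A : Set T) (P : MorphismProperty T) :
    Set (NSeq n T S) :=
  {d | d ∈ DA Ang A ∧ P d.phantom}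

/-- `e : A₀ ⟶ E₀` is a special `H`-injective morphism with respect to `E`: it is
`H`-injective and embeds as the first morphism of an `n`-angle from `A` admitting a
morphism of `n`-angles, with identity ends, to an `n`-angle in `E` whose component
at position `n` lies in `Φ_E(H)`. -/
def IsSpecialInj (Ang : Set (NSeq n T S)) (A : Set T) (E H : Set (NSeq n T S))
    {A₀ E₀ : T} (e : A₀ ⟶ E₀) : Prop :=
  EInj A H e ∧ ∃ d' ∈ DA Ang A, ∃ (h0 : d'.obj 0 = A₀) (h1 : d'.obj 1 = E₀),
    e = eqToHom h0.symm ≫ d'.mor 0 ≫ eqToHom h1 ∧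
    ∃ d ∈ E, ∃ (φ : NSeqHom d' d) (hh : d'.obj 0 = d.obj 0),
      φ.app 0 = eqToHom hh ∧ relPhant A E H (φ.app (n - 1))

/-- `p : P₀ ⟶ C` is a special `H`-projective morphism with respect to `E` (dual of
`IsSpecialInj`). -/
def IsSpecialProj (Ang : Set (NSeq n T S)) (A : Set T) (E H : Set (NSeq n T S))
    {P₀ C : T} (p : P₀ ⟶ C) : Prop :=
  EProj A H p ∧ ∃ d' ∈ DA Ang A, ∃ (h0 : d'.obj (n - 2) = P₀) (h1 : d'.obj (n - 2 + 1) = C),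
    p = eqToHom h0.symm ≫ d'.mor (n - 2) ≫ eqToHom h1 ∧
    ∃ d ∈ E, ∃ (φ : NSeqHom d d') (hh : d.obj (n - 1) = d'.obj (n - 1)),
      φ.app (n - 1) = eqToHom hh ∧ relCophant A E H (φ.app 0)

/-- There are enough special `H`-injective morphisms (with respect to `E`). -/
def EnoughSpecialInj (Ang : Set (NSeq n T S)) (A : Set T)
    (E H : Set (NSeq n T S)) : Prop :=
  ∀ A₀ ∈ A, ∃ (E₀ : T) (e : A₀ ⟶ E₀), IsSpecialInj Ang A E H e

/-- There are enough special `H`-projective morphisms (with respect to `E`). -/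
def EnoughSpecialProj (Ang : Set (NSeq n T S)) (A : Set T)
    (E H : Set (NSeq n T S)) : Prop :=
  ∀ C ∈ A, ∃ (P₀ : T) (p : P₀ ⟶ C), IsSpecialProj Ang A E H p

end Defs

end IdealApprox

open IdealApprox

/-!
Direction (1, ⇒) is the definition applied to `ψ`. The other three rest on two facts.

First, `Φ(F)` is closed under `χ ↦ χ s` and `χ ↦ (Σt) χ` for morphisms `s`, `t` of `A`. The
composite is the last morphism of an `n`-angle, namely the rotation of a completion of its
`Σ`-preimage. The square it forms with the given `F`-angle extends to a morphism of `n`-angles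
that is the identity at one end, so the new angle is a base or cobase change of the old one.
Extending a square at an arbitrary position reduces to (F3) by rotating.

Second, when `p` is `E`-projective every `E`-angle ending in `A` receives a morphism of
`n`-angles from the given one that is the identity on `A`. So every `E`-phantom out of `A` is
`(Σt) ψ`. Dually, when `e` is `E`-injective every `E`-phantom into `ΣA` is `ψ s`. For (2, ⇒),
`ψ = (Σh) s` with `Σh ∈ Φ(E)`, which uses an object `ΣW ∈ A` having `Aₙ` as a retract.
-/

namespace IdealApprox

section Category

variable {T : Type u} [Category.{v} T] {S : T ⥤ T} {n : ℕ}

def NSeqHom.comp {d e f : NSeq n T S} (φ : NSeqHom d e) (ψ : NSeqHom e f) : NSeqHom d f where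
  app i := φ.app i ≫ ψ.app i
  comm i hi := by rw [Category.assoc, ψ.comm i hi, reassoc_of% (φ.comm i hi)]
  comm_phantom := by
    rw [Category.assoc, ψ.comm_phantom, reassoc_of% φ.comm_phantom, S.map_comp]

noncomputable def NSeq.reshape (a : NSeq n T S) (g : ℕ → T) (σ : ∀ i, g i ≅ a.obj i) :
    NSeq n T S where
  obj := g
  mor i := (σ i).hom ≫ a.mor i ≫ (σ (i + 1)).inv
  phantom := (σ (n - 1)).hom ≫ a.phantom ≫ S.map (σ 0).inv

noncomputable def NSeq.replace (a : NSeq n T S) (k : ℕ) {Z : T} (ι : Z ≅ a.obj k) :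
    NSeq n T S :=
  a.reshape (Function.update a.obj k Z) fun i =>
    if h : i = k then eqToIso (by rw [h, Function.update_self]) ≪≫ ι ≪≫ eqToIso (by rw [h])
    else eqToIso (Function.update_of_ne h _ _)

lemma NSeq.replace_obj_self (a : NSeq n T S) (k : ℕ) {Z : T} (ι : Z ≅ a.obj k) :
    (a.replace k ι).obj k = Z :=
  Function.update_self _ _ _

lemma NSeq.replace_obj_of_ne (a : NSeq n T S) {i k : ℕ} (h : i ≠ k) {Z : T}
    (ι : Z ≅ a.obj k) : (a.replace k ι).obj i = a.obj i :=
  Function.update_of_ne h _ _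

def rotObj (d : NSeq n T S) (i : ℕ) : T :=
  if i + 2 ≤ n then d.obj (i + 1) else S.obj (d.obj 0)

lemma rotObj_of_le (d : NSeq n T S) {i : ℕ} (h : i + 2 ≤ n) : rotObj d i = d.obj (i + 1) :=
  if_pos h

lemma rotObj_last (d : NSeq n T S) : rotObj d (n - 1) = S.obj (d.obj 0) :=
  if_neg (by omega)

end Category

lemma neg_one_pow_zsmul_zsmul {M : Type*} [AddCommGroup M] (n : ℕ) (x : M) :
    (-1 : ℤ) ^ n • (-1 : ℤ) ^ n • x = x := by
  rw [smul_smul, ← pow_add, ← two_mul, pow_mul]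
  simp

section Rotation

variable {T : Type u} [Category.{v} T] [Preadditive T] {S : T ⥤ T} {n : ℕ}

noncomputable def NSeq.rotate (hn : 3 ≤ n) (d : NSeq n T S) : NSeq n T S where
  obj := rotObj d
  mor i :=
    if h : i + 3 ≤ n then
      eqToHom (rotObj_of_le d (by omega)) ≫ d.mor (i + 1) ≫
        eqToHom (rotObj_of_le d (by omega)).symm
    else if h' : i + 2 = n then
      eqToHom ((rotObj_of_le d h'.le).trans (by congr 1; omega)) ≫ d.phantom ≫
        eqToHom ((rotObj_last d).symm.trans (by congr 1; omega))
    else 0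
  phantom := eqToHom (rotObj_last d) ≫ ((-1 : ℤ) ^ n • S.map (d.mor 0)) ≫
    eqToHom (congrArg S.obj (rotObj_of_le d (by omega)).symm)

lemma isLeftRotation_rotate (hn : 3 ≤ n) (d : NSeq n T S) :
    IsLeftRotation d (d.rotate hn) where
  hn := hn
  obj_eq _ h := rotObj_of_le d h
  obj_last := rotObj_last d
  mor_eq i h := dif_pos h
  mor_last := by
    simp only [NSeq.rotate, dif_neg (show ¬ n - 2 + 3 ≤ n by omega),
      dif_pos (show n - 2 + 2 = n by omega)]
  phantom_eq := rfl

lemma exists_isLeftRotation (hn : 3 ≤ n) (d : NSeq n T S) : ∃ d', IsLeftRotation d d' :=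
  ⟨_, isLeftRotation_rotate hn d⟩

lemma IsLeftRotation.exists_hom [S.Full] [S.Faithful] {d d' e e' : NSeq n T S}
    (hd : IsLeftRotation d d') (he : IsLeftRotation e e') (φ : NSeqHom d' e') :
    ∃ ψ : NSeqHom d e,
      (∀ i (hi : i + 2 ≤ n), ψ.app (i + 1) =
        eqToHom (hd.obj_eq i hi).symm ≫ φ.app i ≫ eqToHom (he.obj_eq i hi)) ∧
      S.map (ψ.app 0) = eqToHom hd.obj_last.symm ≫ φ.app (n - 1) ≫ eqToHom he.obj_last := by
  obtain ⟨m, rfl⟩ : ∃ m, n = m + 3 := ⟨n - 3, by have := hd.hn; omega⟩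
  let app : ∀ i, d.obj i ⟶ e.obj i
    | 0 => S.preimage (eqToHom hd.obj_last.symm ≫ φ.app (m + 2) ≫ eqToHom he.obj_last)
    | i + 1 => if hi : i + 2 ≤ m + 3 then
        eqToHom (hd.obj_eq i hi).symm ≫ φ.app i ≫ eqToHom (he.obj_eq i hi) else 0
  have app_succ : ∀ i (hi : i + 2 ≤ m + 3), app (i + 1) =
      eqToHom (hd.obj_eq i hi).symm ≫ φ.app i ≫ eqToHom (he.obj_eq i hi) :=
    fun i hi => dif_pos hi
  refine ⟨⟨app, fun i hi => ?_, ?_⟩, app_succ, S.map_preimage _⟩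
  · rcases i with _ | i
    · apply S.map_injective
      have hφ := congrArg ((-1 : ℤ) ^ (m + 3) • ·) φ.comm_phantom
      rw [hd.phantom_eq, he.phantom_eq] at hφ
      simp only [Preadditive.comp_zsmul, Preadditive.zsmul_comp, Category.assoc,
        neg_one_pow_zsmul_zsmul] at hφ
      rw [app_succ 0 hi, S.map_comp, S.map_comp, S.map_preimage]
      simpa [eqToHom_map] using eqToHom hd.obj_last.symm ≫= hφ =≫
        S.map (eqToHom (he.obj_eq 0 (by omega)))
    · have hφ := φ.comm i (by omega)
      rw [hd.mor_eq i (by omega), he.mor_eq i (by omega)] at hφ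
      rw [app_succ i (by omega), app_succ (i + 1) hi]
      simpa using eqToHom (hd.obj_eq i (by omega)).symm ≫= hφ =≫ eqToHom (he.obj_eq (i + 1) hi)
  · have hφ := φ.comm (m + 1) (by omega)
    erw [hd.mor_last, he.mor_last] at hφ
    change app (m + 2) ≫ _ = _
    rw [app_succ (m + 1) (by omega), S.map_preimage]
    simpa using eqToHom (hd.obj_eq (m + 1) (by omega)).symm ≫= hφ =≫ eqToHom he.obj_last

end Rotation

section Angles

variable {T : Type u} [Category.{v} T] [Preadditive T] [HasZeroObject T]
  [HasBinaryBiproducts T] {S : T ⥤ T} {n : ℕ} {Ang : Set (NSeq n T S)}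

lemma reshape_mem (hAng : IsNAngulated Ang) {a : NSeq n T S} (ha : a ∈ Ang) (g : ℕ → T)
    (σ : ∀ i, g i ≅ a.obj i) : a.reshape g σ ∈ Ang := by
  refine hAng.summand_mem _ a ha
    ⟨⟨fun i => (σ i).hom, fun i _ => by simp [NSeq.reshape], ?_⟩,
      ⟨fun i => (σ i).inv, fun i _ => by simp [NSeq.reshape], by simp [NSeq.reshape]⟩,
      fun i => by simp [NSeq.reshape]⟩
  simp [NSeq.reshape, ← S.map_comp]

lemma replace_mem (hAng : IsNAngulated Ang) {a : NSeq n T S} (ha : a ∈ Ang) (k : ℕ) {Z : T}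
    (ι : Z ≅ a.obj k) : a.replace k ι ∈ Ang :=
  reshape_mem hAng ha _ _

lemma exists_hom_extending_square (hAng : IsNAngulated Ang) (hn : 3 ≤ n) [S.Full] [S.Faithful]
    (j : ℕ) (hj : j + 2 ≤ n) {d e : NSeq n T S} (hd : d ∈ Ang) (he : e ∈ Ang)
    (a : d.obj j ⟶ e.obj j) (b : d.obj (j + 1) ⟶ e.obj (j + 1))
    (hab : a ≫ e.mor j = d.mor j ≫ b) :
    ∃ φ : NSeqHom d e, φ.app j = a ∧ φ.app (j + 1) = b := by
  induction j generalizing d e with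
  | zero =>
    obtain ⟨φ, h0, h1, -⟩ := hAng.fill d e hd he a b hab
    exact ⟨φ, h0, h1⟩
  | succ j ih =>
    obtain ⟨d', hd'⟩ := exists_isLeftRotation hn d
    obtain ⟨e', he'⟩ := exists_isLeftRotation hn e
    obtain ⟨φ', h0, h1⟩ := ih (by omega) ((hAng.rotate d d' hd').1 hd)
      ((hAng.rotate e e' he').1 he)
      (eqToHom (hd'.obj_eq j (by omega)) ≫ a ≫ eqToHom (he'.obj_eq j (by omega)).symm)
      (eqToHom (hd'.obj_eq (j + 1) hj) ≫ b ≫ eqToHom (he'.obj_eq (j + 1) hj).symm)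
      (by rw [hd'.mor_eq j (by omega), he'.mor_eq j (by omega)]; simp [reassoc_of% hab])
    obtain ⟨φ, hφ, -⟩ := hd'.exists_hom he' φ'
    exact ⟨φ, by simp [hφ j (by omega), h0], by simp [hφ (j + 1) hj, h1]⟩

lemma exists_hom_extending_phantom_square (hAng : IsNAngulated Ang) (hn : 3 ≤ n)
    [S.Full] [S.Faithful] {d e : NSeq n T S} (hd : d ∈ Ang) (he : e ∈ Ang)
    (u : d.obj (n - 1) ⟶ e.obj (n - 1)) (v : d.obj 0 ⟶ e.obj 0)
    (huv : u ≫ e.phantom = d.phantom ≫ S.map v) :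
    ∃ φ : NSeqHom d e, φ.app (n - 1) = u ∧ φ.app 0 = v := by
  obtain ⟨m, rfl⟩ : ∃ m, n = m + 3 := ⟨n - 3, by omega⟩
  obtain ⟨d', hd'⟩ := exists_isLeftRotation hn d
  obtain ⟨e', he'⟩ := exists_isLeftRotation hn e
  obtain ⟨φ', h1, h2⟩ := exists_hom_extending_square hAng hn (m + 1) (by omega)
    ((hAng.rotate d d' hd').1 hd) ((hAng.rotate e e' he').1 he)
    (eqToHom (hd'.obj_eq (m + 1) (by omega)) ≫ u ≫ eqToHom (he'.obj_eq (m + 1) (by omega)).symm)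
    (eqToHom hd'.obj_last ≫ S.map v ≫ eqToHom he'.obj_last.symm)
    (by erw [hd'.mor_last, he'.mor_last]; simp [reassoc_of% huv])
  obtain ⟨φ, hφ, hφ0⟩ := hd'.exists_hom he' φ'
  refine ⟨φ, by simp [hφ (m + 1) (by omega), h1], S.map_injective ?_⟩
  rw [hφ0]
  erw [h2]
  simp

/- Complete a `Σ`-preimage of `(-1)ⁿ f` and rotate once; the rotation's sign cancels. -/
lemma exists_mem_phantom_eq (hAng : IsNAngulated Ang) (hn : 3 ≤ n) [S.Full] [S.EssSurj]
    {X B : T} (f : X ⟶ S.obj B) :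
    ∃ H ∈ Ang, ∃ (h1 : H.obj (n - 1) = X) (h0 : H.obj 0 = B),
      H.phantom = eqToHom h1 ≫ f ≫ eqToHom (congrArg S.obj h0.symm) := by
  let α := S.objObjPreimageIso X
  obtain ⟨M, hM, h0, h1, hM0⟩ := hAng.complete (S.preimage ((-1 : ℤ) ^ n • (α.hom ≫ f)))
  obtain ⟨M', hM'⟩ := exists_isLeftRotation hn M
  refine ⟨M'.replace (n - 1) (α.symm ≪≫ eqToIso (hM'.obj_last.trans (congrArg S.obj h0)).symm),
    replace_mem hAng ((hAng.rotate M M' hM').1 hM) _ _, M'.replace_obj_self _ _,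
    (M'.replace_obj_of_ne (by omega) _).trans ((hM'.obj_eq 0 (by omega)).trans h1), ?_⟩
  have h0n : (0 : ℕ) ≠ n - 1 := by omega
  simp [NSeq.replace, NSeq.reshape, h0n, hM'.phantom_eq, hM0, eqToHom_map,
    neg_one_pow_zsmul_zsmul]

end Angles

section Phantoms

variable {T : Type u} [Category.{v} T] {S : T ⥤ T} {n : ℕ} {Ang F : Set (NSeq n T S)}
  {A : Set T}

lemma ClosedUnderExtensions.mem_DA (hA : ClosedUnderExtensions Ang A) {f : NSeq n T S}
    (hf : f ∈ Ang) (h0 : f.obj 0 ∈ A) (h1 : f.obj (n - 1) ∈ A) : f ∈ DA Ang A :=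
  ⟨hf, hA f hf h0 h1⟩

lemma phant_phantom {d : NSeq n T S} (hd : d ∈ F) : phant F d.phantom :=
  ⟨d, hd, rfl, rfl, by simp⟩

lemma phant_comp_eqToHom {X Y Y' : T} {χ : X ⟶ Y} (hχ : phant F χ) (h : Y = Y') :
    phant F (χ ≫ eqToHom h) := by
  obtain ⟨f, hf, hX, hY, rfl⟩ := hχ
  exact ⟨f, hf, hX, hY.trans h, by simp⟩

variable [Preadditive T] [HasBinaryBiproducts T]

lemma IsAlmostNExact.mem (hF : IsAlmostNExact Ang A F) {f : NSeq n T S} (hf : f ∈ F) :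
    f ∈ Ang :=
  (hF.subset_DA hf).1

lemma IsAlmostNExact.obj_mem (hF : IsAlmostNExact Ang A F) {f : NSeq n T S} (hf : f ∈ F)
    {i : ℕ} (hi : i < n) : f.obj i ∈ A :=
  (hF.subset_DA hf).2 i hi

variable [HasZeroObject T]

/- `A` need not be closed under isomorphisms, so `ΣW` is obtained as a middle term of the
`n`-angle `(B → B → 0 → ⋯ → 0) ⊕ (0 → ⋯ → 0 → ΣU → ΣU)` with `ΣU ≅ X`, after its end terms
are replaced by `B` and `X`. -/
lemma exists_retract_shift_mem (hAng : IsNAngulated Ang) (hn : 3 ≤ n) [S.EssSurj]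
    (hA : ClosedUnderExtensions Ang A) {B X : T} (hB : B ∈ A) (hX : X ∈ A) :
    ∃ (W : T) (i : X ⟶ S.obj W) (p : S.obj W ⟶ X), S.obj W ∈ A ∧ i ≫ p = 𝟙 X := by
  obtain ⟨m, rfl⟩ : ∃ m, n = m + 3 := ⟨n - 3, by omega⟩
  let σ := S.objObjPreimageIso X
  obtain ⟨R, hR⟩ := exists_isLeftRotation hn (trivialNSeq (S := S) (S.objPreimage X))
  obtain ⟨R', hR'⟩ := exists_isLeftRotation hn R
  have hR'0 : IsZero (R'.obj 0) := by
    rw [hR'.obj_eq 0 (by omega), hR.obj_eq 1 (by omega)]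
    exact isZero_zero T
  have hR's : R'.obj (m + 1) = S.obj (S.objPreimage X) :=
    (hR'.obj_eq (m + 1) (by omega)).trans hR.obj_last
  have hR'l : R'.obj (m + 2) = S.obj (S.objPreimage X) :=
    hR'.obj_last.trans (congrArg S.obj (hR.obj_eq 0 (by omega)))
  let K := biprodSeq (trivialNSeq B) R'
  have hK : K ∈ Ang := hAng.biprod_mem _ _ (hAng.trivial_mem B)
    ((hAng.rotate R R' hR').1 ((hAng.rotate _ R hR).1 (hAng.trivial_mem _)))
  let ζ : S.obj (S.objPreimage (K.obj (m + 1))) ≅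
      (trivialNSeq (S := S) B).obj (m + 1) ⊞ R'.obj (m + 1) :=
    S.objObjPreimageIso (K.obj (m + 1))
  let K₀ := K.replace 0 (isoBiprodZero hR'0)
  let K₁ := K₀.replace (m + 1) (ζ ≪≫ eqToIso (K.replace_obj_of_ne (by omega) _).symm)
  have hK₁ : K₁.obj (m + 2) = K.obj (m + 2) :=
    (K₀.replace_obj_of_ne (by omega) _).trans (K.replace_obj_of_ne (by omega) _)
  let K₂ := K₁.replace (m + 2)
    (σ.symm ≪≫ eqToIso hR'l.symm ≪≫ isoZeroBiprod (isZero_zero T) ≪≫ eqToIso hK₁.symm)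
  have hK₂ : K₂ ∈ Ang := replace_mem hAng (replace_mem hAng (replace_mem hAng hK _ _) _ _) _ _
  have h0 : K₂.obj 0 = B := (K₁.replace_obj_of_ne (by omega) _).trans
    ((K₀.replace_obj_of_ne (by omega) _).trans (K.replace_obj_self _ _))
  have hs : K₂.obj (m + 1) = S.obj (S.objPreimage (K.obj (m + 1))) :=
    (K₁.replace_obj_of_ne (by omega) _).trans (K₀.replace_obj_self _ _)
  have hW := hA K₂ hK₂ (h0 ▸ hB) ((K₁.replace_obj_self _ _).symm ▸ hX) (m + 1) (by omega)
  refine ⟨S.objPreimage (K.obj (m + 1)), σ.inv ≫ eqToHom hR's.symm ≫ biprod.inr ≫ ζ.inv,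
    ζ.hom ≫ biprod.snd ≫ eqToHom hR's ≫ σ.hom, hs ▸ hW, ?_⟩
  simp

variable [S.Full] [S.Faithful] [S.EssSurj]

lemma IsAlmostNExact.exists_baseChange (hAng : IsNAngulated Ang) (hn : 3 ≤ n)
    (hA : ClosedUnderExtensions Ang A) (hF : IsAlmostNExact Ang A F) {f : NSeq n T S}
    (hf : f ∈ F) {P : T} (hP : P ∈ A) (s : P ⟶ f.obj (n - 1)) :
    ∃ G ∈ F, ∃ (h1 : G.obj (n - 1) = P) (h0 : G.obj 0 = f.obj 0) (Θ : NSeqHom G f),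
      Θ.app (n - 1) = eqToHom h1 ≫ s ∧ Θ.app 0 = eqToHom h0 := by
  obtain ⟨G, hG, h1, h0, hGph⟩ := exists_mem_phantom_eq hAng hn (s ≫ f.phantom)
  obtain ⟨Θ, hΘ1, hΘ0⟩ := exists_hom_extending_phantom_square hAng hn hG (hF.mem hf)
    (eqToHom h1 ≫ s) (eqToHom h0) (by simp [hGph, eqToHom_map])
  have hGA : G ∈ DA Ang A :=
    hA.mem_DA hG (by rw [h0]; exact hF.obj_mem hf (by omega)) (by rw [h1]; exact hP)
  exact ⟨G, hF.base_change f hf G hGA Θ h0 hΘ0, h1, h0, Θ, hΘ1, hΘ0⟩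

lemma IsAlmostNExact.exists_cobaseChange (hAng : IsNAngulated Ang) (hn : 3 ≤ n)
    (hA : ClosedUnderExtensions Ang A) (hF : IsAlmostNExact Ang A F) {f : NSeq n T S}
    (hf : f ∈ F) {B : T} (hB : B ∈ A) (t : f.obj 0 ⟶ B) :
    ∃ H ∈ F, ∃ (h1 : H.obj (n - 1) = f.obj (n - 1)) (h0 : H.obj 0 = B) (Θ : NSeqHom f H),
      Θ.app (n - 1) = eqToHom h1.symm ∧ Θ.app 0 = t ≫ eqToHom h0.symm := by
  obtain ⟨H, hH, h1, h0, hHph⟩ := exists_mem_phantom_eq hAng hn (f.phantom ≫ S.map t)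
  obtain ⟨Θ, hΘ1, hΘ0⟩ := exists_hom_extending_phantom_square hAng hn (hF.mem hf) hH
    (eqToHom h1.symm) (t ≫ eqToHom h0.symm) (by simp [hHph, eqToHom_map])
  have hHA : H ∈ DA Ang A :=
    hA.mem_DA hH (by rw [h0]; exact hB) (by rw [h1]; exact hF.obj_mem hf (by omega))
  exact ⟨H, hF.cobase_change f hf H hHA Θ h1.symm hΘ1, h1, h0, Θ, hΘ1, hΘ0⟩

lemma phant_precomp (hAng : IsNAngulated Ang) (hn : 3 ≤ n) (hA : ClosedUnderExtensions Ang A)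
    (hF : IsAlmostNExact Ang A F) {P X Y : T} (s : P ⟶ X) {χ : X ⟶ Y} (hχ : phant F χ)
    (hP : P ∈ A) : phant F (s ≫ χ) := by
  obtain ⟨f, hf, rfl, rfl, rfl⟩ := hχ
  obtain ⟨G, hG, h1, h0, Θ, hΘ1, hΘ0⟩ := hF.exists_baseChange hAng hn hA hf hP s
  have hΘ := Θ.comm_phantom
  rw [hΘ1, hΘ0] at hΘ
  exact ⟨G, hG, h1, congrArg S.obj h0, by simpa [eqToHom_map] using eqToHom h1.symm ≫= hΘ⟩

lemma phant_comp_map (hAng : IsNAngulated Ang) (hn : 3 ≤ n) (hA : ClosedUnderExtensions Ang A)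
    (hF : IsAlmostNExact Ang A F) {X B B' : T} {χ : X ⟶ S.obj B} (hχ : phant F χ)
    (t : B ⟶ B') (hB' : B' ∈ A) : phant F (χ ≫ S.map t) := by
  obtain ⟨f, hf, rfl, hY, rfl⟩ := hχ
  obtain ⟨H, hH, h1, h0, Θ, hΘ1, hΘ0⟩ :=
    hF.exists_cobaseChange hAng hn hA hf hB' (S.preimage (eqToHom hY ≫ S.map t))
  have hΘ := Θ.comm_phantom
  rw [hΘ1, hΘ0] at hΘ
  refine ⟨H, hH, h1, congrArg S.obj h0, ?_⟩
  simpa [eqToHom_map] using (hΘ =≫ S.map (eqToHom h0)).symm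

lemma exists_hom_app_last_eq_of_eProj (hAng : IsNAngulated Ang) (hn : 3 ≤ n)
    (hA : ClosedUnderExtensions Ang A) {E : Set (NSeq n T S)} (hE : IsAlmostNExact Ang A E)
    {d e : NSeq n T S} (hd : d ∈ E) (he : e ∈ E) (hp : EProj A E (d.mor (n - 2)))
    (u : d.obj (n - 1) ⟶ e.obj (n - 1)) : ∃ φ : NSeqHom d e, φ.app (n - 1) = u := by
  obtain ⟨m, rfl⟩ : ∃ m, n = m + 3 := ⟨n - 3, by omega⟩
  obtain ⟨G, hG, h1, -, Θ, hΘ1, -⟩ :=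
    hE.exists_baseChange hAng hn hA he (hE.obj_mem hd (by omega)) u
  obtain ⟨g, hg⟩ :=
    hp.2.2 (G.mor (m + 1) ≫ eqToHom h1) ⟨G, hG, rfl, h1, (Category.id_comp _).symm⟩
  obtain ⟨φ, -, hφ⟩ := exists_hom_extending_square hAng hn (m + 1) (by omega) (hE.mem hd)
    (hE.mem hG) g (eqToHom h1.symm) (by erw [← hg]; simp)
  refine ⟨φ.comp Θ, ?_⟩
  change φ.app (m + 2) ≫ Θ.app (m + 2) = u
  erw [hφ, hΘ1]
  simp

lemma exists_hom_app_zero_eq_of_eInj (hAng : IsNAngulated Ang) (hn : 3 ≤ n)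
    (hA : ClosedUnderExtensions Ang A) {E : Set (NSeq n T S)} (hE : IsAlmostNExact Ang A E)
    {d e : NSeq n T S} (hd : d ∈ E) (he : e ∈ E) (hi : EInj A E (d.mor 0))
    (t : e.obj 0 ⟶ d.obj 0) : ∃ φ : NSeqHom e d, φ.app 0 = t := by
  obtain ⟨H, hH, -, h0, Θ, -, hΘ0⟩ :=
    hE.exists_cobaseChange hAng hn hA he (hE.obj_mem hd (by omega)) t
  obtain ⟨g, hg⟩ := hi.2.2 (eqToHom h0.symm ≫ H.mor 0) ⟨H, hH, h0, rfl, by simp⟩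
  obtain ⟨Ψ, hΨ, -, -⟩ :=
    hAng.fill H d (hE.mem hH) (hE.mem hd) (eqToHom h0) g (by rw [← hg]; simp)
  exact ⟨Θ.comp Ψ, by simp [NSeqHom.comp, hΘ0, hΨ]⟩

lemma exists_phantom_eq_comp_map (hAng : IsNAngulated Ang) (hn : 3 ≤ n)
    (hA : ClosedUnderExtensions Ang A) (hF : IsAlmostNExact Ang A F) {d : NSeq n T S}
    (hd : d ∈ F) :
    ∃ (W : T) (h : W ⟶ d.obj 0) (s : d.obj (n - 1) ⟶ S.obj W),
      phant F (S.map h) ∧ d.phantom = s ≫ S.map h := by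
  obtain ⟨W, i, p, hW, hip⟩ := exists_retract_shift_mem hAng hn hA
    (hF.obj_mem hd (by omega : 0 < n)) (hF.obj_mem hd (by omega : n - 1 < n))
  refine ⟨W, S.preimage (p ≫ d.phantom), i, ?_, by simp [reassoc_of% hip]⟩
  rw [S.map_preimage]
  exact phant_precomp hAng hn hA hF p (phant_phantom hd) hW

end Phantoms

end IdealApprox

theorem stmt_15_general {T : Type u} [Category.{v} T] [Preadditive T] [HasZeroObject T]
    [HasBinaryBiproducts T] (S : T ⥤ T) [S.IsEquivalence] {n : ℕ} (hn : 3 ≤ n)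
    (Ang : Set (NSeq n T S)) (hAng : IsNAngulated Ang)
    (A : Set T) (hA : ClosedUnderExtensions Ang A)
    (E : Set (NSeq n T S)) (hE : IsAlmostNExact Ang A E)
    (F : Set (NSeq n T S)) (hF : IsAlmostNExact Ang A F) :
    (∀ d ∈ E, EProj A E (d.mor (n - 2)) →
      ∀ ⦃X : T⦄, X ∈ A → ∀ φ : X ⟶ d.obj (n - 1),
        (relPhant A E F φ ↔ phant F (φ ≫ d.phantom))) ∧
    (∀ d ∈ E, EInj A E (d.mor 0) →
      ∀ ⦃Y : T⦄, Y ∈ A → ∀ φ : d.obj 0 ⟶ Y,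
        (relCophant A E F φ ↔ phant F (d.phantom ≫ S.map φ))) := by
  refine ⟨fun d hd hp X hX φ => ⟨fun hφ => hφ.2.2 _ (phant_phantom hd), fun hφ => ?_⟩,
    fun d hd hi Y hY φ => ⟨fun hφ => ?_, fun hφ => ?_⟩⟩
  · refine ⟨hX, hE.obj_mem hd (by omega), fun B h hh => ?_⟩
    obtain ⟨e, he, hXe, hYe, rfl⟩ := hh
    obtain ⟨ψ, hψ⟩ := exists_hom_app_last_eq_of_eProj hAng hn hA hE hd he hp (eqToHom hXe.symm)
    have hφh : φ ≫ eqToHom hXe.symm ≫ e.phantom ≫ eqToHom hYe =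
        ((φ ≫ d.phantom) ≫ S.map (ψ.app 0)) ≫ eqToHom hYe := by
      simp [← hψ, reassoc_of% ψ.comm_phantom]
    rw [hφh]
    exact phant_comp_eqToHom (phant_comp_map hAng hn hA hF hφ _ (hE.obj_mem he (by omega))) hYe
  · obtain ⟨W, h, s, hh, hψ⟩ := exists_phantom_eq_comp_map hAng hn hA hE hd
    rw [hψ, Category.assoc, ← S.map_comp]
    exact phant_precomp hAng hn hA hF s (hφ.2.2 h hh) (hE.obj_mem hd (by omega))
  · refine ⟨hE.obj_mem hd (by omega), hY, fun W h hh => ?_⟩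
    obtain ⟨e, he, hXe, hYe, hh⟩ := hh
    obtain ⟨ψ, hψ⟩ :=
      exists_hom_app_zero_eq_of_eInj hAng hn hA hE hd he hi (S.preimage (eqToHom hYe))
    have hSh : S.map h = (eqToHom hXe.symm ≫ ψ.app (n - 1)) ≫ d.phantom := by
      rw [hh, Category.assoc, ψ.comm_phantom, hψ, S.map_preimage]
    rw [S.map_comp, hSh, Category.assoc]
    exact phant_precomp hAng hn hA hF _ hφ (hXe ▸ hE.obj_mem he (by omega))

/-- `E`-projective `E`-deflations (resp. `E`-injective `E`-inflations) are test maps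
for relative phantoms (resp. relative cophantoms). -/
theorem stmt_15 {T : Type u} [Category.{v} T] [Preadditive T] [HasZeroObject T]
    [HasBinaryBiproducts T] (S : T ⥤ T) [S.IsEquivalence] {n : ℕ} (hn : 3 ≤ n)
    (Ang : Set (NSeq n T S)) (hAng : IsNAngulated Ang)
    (A : Set T) (hA : ClosedUnderExtensions Ang A)
    (E : Set (NSeq n T S)) (hE : IsAlmostNExact Ang A E)
    (F : Set (NSeq n T S)) (hF : IsAlmostNExact Ang A F) (hFE : F ⊆ E) :
    (∀ d ∈ E, EProj A E (d.mor (n - 2)) →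
      ∀ ⦃X : T⦄, X ∈ A → ∀ φ : X ⟶ d.obj (n - 1),
        (relPhant A E F φ ↔ phant F (φ ≫ d.phantom))) ∧
    (∀ d ∈ E, EInj A E (d.mor 0) →
      ∀ ⦃Y : T⦄, Y ∈ A → ∀ φ : d.obj 0 ⟶ Y,
        (relCophant A E F φ ↔ phant F (d.phantom ≫ S.map φ))) :=
  stmt_15_general S hn Ang hAng A hA E hE F hF
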